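/- Let Λ ⊂ ℝ^n be a Delone set with finite local complexity and let ε > 0. Then there exist finitely many vectors z_1, …, z_N ∈ ℝ^n such that the translates Λ + z_1, …, Λ + z_N are pairwise disjoint and the set Λ̄ = ⋃_{i=1}^N (Λ + z_i) has hole ρ(Λ̄) < ε. -/

import Mathlib

open MeasureTheory Filter Topology Metric
open scoped ENNReal RealInnerProductSpace

noncomputable section

abbrev Ed (d : ℕ) := EuclideanSpace ℝ (Fin d)
abbrev TF (d : ℕ) := Ed d × Ed d

def UniformlyDiscrete {V : Type*} [NormedAddCommGroup V] (Λ : Set V) : Prop :=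
  ∃ r > 0, ∀ x ∈ Λ, ∀ y ∈ Λ, x ≠ y → r ≤ dist x y

def hole {V : Type*} [NormedAddCommGroup V] (Λ : Set V) : ℝ≥0∞ :=
  ⨆ z : V, ⨅ l : Λ, edist z (l : V)

def RelativelyDense {V : Type*} [NormedAddCommGroup V] (Λ : Set V) : Prop := hole Λ < ⊤

def IsDelone {V : Type*} [NormedAddCommGroup V] (Λ : Set V) : Prop :=
  UniformlyDiscrete Λ ∧ RelativelyDense Λ

def patchAt {V : Type*} [NormedAddCommGroup V] (Λ : Set V) (r : ℝ) (l : V) : Set V :=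
  (fun y => y - l) '' (Λ ∩ Metric.ball l r)

def FLC {V : Type*} [NormedAddCommGroup V] (Λ : Set V) : Prop :=
  ∀ r > 0, {P : Set V | ∃ l ∈ Λ, P = patchAt Λ r l}.Finite

def hull {V : Type*} [NormedAddCommGroup V] (Λ : Set V) : Set (Set V) :=
  {T | IsDelone T ∧ ∀ R > 0, ∀ ε > 0, ∃ z w : V, ‖w‖ < ε ∧
      ((fun y => y - z - w) '' Λ) ∩ Metric.ball 0 R = T ∩ Metric.ball 0 R}

def patchCount {V : Type*} [NormedAddCommGroup V] (Λ P A : Set V) : ℕ :=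
  {z : V | (fun p => p + z) '' P ⊆ Λ ∩ A}.ncard

def UCF {d : ℕ} (Λ : Set (TF d)) : Prop :=
  ∀ r > 0, ∀ l ∈ Λ, ∃ c : ℝ, ∀ ε > 0, ∃ R₀ : ℝ, ∀ R ≥ R₀, ∀ w : TF d,
    |(patchCount Λ (patchAt Λ r l) (Metric.ball w R) : ℝ) /
      (volume (Metric.ball w R)).toReal - c| < ε

def IsQuasicrystal {d : ℕ} (Λ : Set (TF d)) : Prop :=
  IsDelone Λ ∧ FLC Λ ∧ UCF Λ

def tfShift {d : ℕ} (z : TF d) (f : Ed d → ℂ) : Ed d → ℂ :=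
  fun t => Complex.exp (2 * Real.pi * Complex.I * ((inner ℝ z.2 t : ℝ) : ℂ)) * f (t - z.1)

def L2inner {d : ℕ} (f g : Ed d → ℂ) : ℂ := ∫ t, f t * (starRingEnd ℂ) (g t)

def gaborCoeffSq {d N : ℕ} (g : Fin N → Ed d → ℂ) (Λ : Set (TF d)) (f : Ed d → ℂ) : ℝ≥0∞ :=
  ∑' (i : Fin N) (z : Λ), (‖L2inner f (tfShift (z : TF d) (g i))‖₊ : ℝ≥0∞) ^ 2

def IsFrameWith {d N : ℕ} (g : Fin N → Ed d → ℂ) (Λ : Set (TF d)) (A B : ℝ) : Prop :=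
  ∀ f : Ed d → ℂ, MemLp f 2 volume →
    ENNReal.ofReal A * (∫⁻ t, (‖f t‖₊ : ℝ≥0∞) ^ 2) ≤ gaborCoeffSq g Λ f ∧
    gaborCoeffSq g Λ f ≤ ENNReal.ofReal B * (∫⁻ t, (‖f t‖₊ : ℝ≥0∞) ^ 2)

def IsGaborFrame {d N : ℕ} (g : Fin N → Ed d → ℂ) (Λ : Set (TF d)) : Prop :=
  ∃ A B : ℝ, 0 < A ∧ 0 < B ∧ IsFrameWith g Λ A B

def gaussW (d : ℕ) : Ed d → ℂ :=
  fun t => (((2 : ℝ) ^ ((d : ℝ) / 4) : ℝ) : ℂ) * Complex.exp (-((Real.pi * ‖t‖ ^ 2 : ℝ) : ℂ))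

def stft {d : ℕ} (f : Ed d → ℂ) (z : TF d) : ℂ :=
  ∫ t, f t * gaussW d (t - z.1) * Complex.exp (-(2 * Real.pi * Complex.I) * ((inner ℝ z.2 t : ℝ) : ℂ))

def M1norm {d : ℕ} (f : Ed d → ℂ) : ℝ := ∫ z : TF d, ‖stft f z‖

def MemM1 {d : ℕ} (f : Ed d → ℂ) : Prop :=
  MemLp f 2 volume ∧ Integrable (fun z : TF d => ‖stft f z‖)

def frameOp {d N : ℕ} (g : Fin N → Ed d → ℂ) (T : Set (TF d)) (f : Ed d → ℂ) : Ed d → ℂ :=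
  fun t => ∑' (i : Fin N) (z : T), L2inner f (tfShift (z : TF d) (g i)) * tfShift (z : TF d) (g i) t

def IsM1FrameWith {d N : ℕ} (g : Fin N → Ed d → ℂ) (Λ : Set (TF d)) (A B : ℝ) : Prop :=
  ∀ f : Ed d → ℂ, MemM1 f →
    Real.sqrt A * M1norm f ≤ M1norm (frameOp g Λ f) ∧
    M1norm (frameOp g Λ f) ≤ Real.sqrt B * M1norm f

def IsM1Frame {d N : ℕ} (g : Fin N → Ed d → ℂ) (Λ : Set (TF d)) : Prop :=
  ∃ A B : ℝ, 0 < A ∧ 0 < B ∧ IsM1FrameWith g Λ A B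

def unitCube {n : ℕ} (z : Ed n) : Set (Ed n) := {y | ∀ i, |y i - z i| ≤ 1 / 2}

def relConst {n : ℕ} (Λ : Set (Ed n)) : ℕ∞ := ⨆ z : Ed n, (Λ ∩ unitCube z).encard

def unitCubeTF {d : ℕ} (z : TF d) : Set (TF d) :=
  {y | (∀ i, |y.1 i - z.1 i| ≤ 1 / 2) ∧ ∀ i, |y.2 i - z.2 i| ≤ 1 / 2}

def RelSepTF {d : ℕ} (Λ : Set (TF d)) : Prop :=
  ∃ C : ℕ, ∀ z : TF d, (Λ ∩ unitCubeTF z).encard ≤ C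

def cubeTF (d : ℕ) (k : ℝ) : Set (TF d) :=
  {z | (∀ i, |z.1 i| ≤ k / 2) ∧ ∀ i, |z.2 i| ≤ k / 2}

/-!
A uniformly discrete set `Λ` is countable, hence so is `Λ - Λ`, and the translates `Λ + a` and
`Λ + b` are disjoint as soon as `a - b ∉ Λ - Λ`. If every point lies within `R` of `Λ`, take a
finite `ε/4`-net `v₁, …, v_N` of the closed ball of radius `R`. Because a countable set has dense
complement, the `vᵢ` can be moved one at a time by less than `ε/4` to points `zᵢ` whose pairwise
differences avoid `Λ - Λ`. A point `x` lies within `R` of some `l ∈ Λ`, `x - l` within `ε/4` of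
some `vᵢ`, so `x` lies within `ε/2` of `l + zᵢ`.
-/

open Set

section Translates

variable {V : Type*} [NormedAddCommGroup V]

theorem UniformlyDiscrete.countable [TopologicalSpace.SeparableSpace V] {Λ : Set V}
    (h : UniformlyDiscrete Λ) : Λ.Countable := by
  obtain ⟨r, hr, hsep⟩ := h
  refine PairwiseDisjoint.countable_of_isOpen (s := fun x => ball x (r / 2)) ?_
    (fun _ _ => isOpen_ball) (fun _ _ => nonempty_ball.2 (half_pos hr))
  intro x hx y hy hxy
  exact ball_disjoint_ball (by linarith [hsep x hx y hy hxy])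

theorem RelativelyDense.exists_forall_exists_dist_lt {Λ : Set V} (h : RelativelyDense Λ) :
    ∃ R : ℝ, ∀ x, ∃ l ∈ Λ, dist x l < R := by
  refine ⟨(hole Λ).toReal + 1, fun x => ?_⟩
  have hx : ⨅ l : Λ, edist x (l : V) < ENNReal.ofReal ((hole Λ).toReal + 1) :=
    (le_iSup (fun z => ⨅ l : Λ, edist z (l : V)) x).trans_lt
      ((ENNReal.lt_ofReal_iff_toReal_lt h.ne).2 (lt_add_one _))
  obtain ⟨l, hl⟩ := iInf_lt_iff.1 hx
  exact ⟨l, l.2, edist_lt_ofReal.1 hl⟩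

theorem hole_le_ofReal {S : Set V} {r : ℝ} (hr : 0 ≤ r) (h : ∀ x, ∃ y ∈ S, dist x y ≤ r) :
    hole S ≤ ENNReal.ofReal r :=
  iSup_le fun x =>
    let ⟨y, hy, hxy⟩ := h x
    iInf_le_of_le ⟨y, hy⟩ ((edist_le_ofReal hr).2 hxy)

open scoped Pointwise in
theorem disjoint_image_add_right_of_sub_notMem {Λ : Set V} {a b : V} (h : a - b ∉ Λ - Λ) :
    Disjoint ((fun y => y + a) '' Λ) ((fun y => y + b) '' Λ) := by
  rw [Set.disjoint_left]
  rintro _ ⟨x, hx, rfl⟩ ⟨y, hy, hyx⟩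
  exact h ⟨y, hy, x, hx, sub_eq_sub_iff_add_eq_add.2 (hyx.trans (add_comm x a))⟩

theorem hole_iUnion_image_add_right_le {Λ : Set V} {R δ δ' : ℝ} (hδ : 0 ≤ δ) (hδ' : 0 ≤ δ')
    (hΛ : ∀ x, ∃ l ∈ Λ, dist x l < R) {N : ℕ} {v z : Fin N → V}
    (hv : closedBall 0 R ⊆ ⋃ i, ball (v i) δ) (hz : ∀ i, dist (z i) (v i) < δ') :
    hole (⋃ i, (fun y => y + z i) '' Λ) ≤ ENNReal.ofReal (δ + δ') := by
  refine hole_le_ofReal (add_nonneg hδ hδ') fun x => ?_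
  obtain ⟨l, hl, hxl⟩ := hΛ x
  have hxl' : x - l ∈ closedBall 0 R := by
    rw [mem_closedBall, dist_zero_right, ← dist_eq_norm]
    exact hxl.le
  obtain ⟨i, hi⟩ := mem_iUnion.1 (hv hxl')
  refine ⟨l + z i, mem_iUnion.2 ⟨i, l, hl, rfl⟩, ?_⟩
  calc dist x (l + z i) = dist (x - l) (z i) := by rw [dist_eq_norm, dist_eq_norm, sub_sub]
    _ ≤ dist (x - l) (v i) + dist (v i) (z i) := dist_triangle _ _ _
    _ ≤ δ + δ' := add_le_add (mem_ball.1 hi).le (dist_comm (z i) (v i) ▸ (hz i).le)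

end Translates

theorem exists_dist_lt_pairwise_sub_notMem {E : Type*} [NormedAddCommGroup E] [NormedSpace ℝ E]
    [Nontrivial E] {D : Set E} (hD : D.Countable) {δ : ℝ} (hδ : 0 < δ) :
    ∀ {N : ℕ} (v : Fin N → E), ∃ z : Fin N → E,
      (∀ i, dist (z i) (v i) < δ) ∧ Pairwise fun i j => z i - z j ∉ D
  | 0, _ => ⟨Fin.elim0, fun i => i.elim0, fun i => i.elim0⟩
  | N + 1, v => by
    obtain ⟨z, hzv, hzD⟩ := exists_dist_lt_pairwise_sub_notMem hD hδ (Fin.init v)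
    have hbad : (⋃ j, (· - z j) ⁻¹' D ∪ (z j - ·) ⁻¹' D).Countable :=
      countable_iUnion fun j =>
        (hD.preimage sub_left_injective).union (hD.preimage sub_right_injective)
    obtain ⟨p, hpD, hpv⟩ := (hbad.dense_compl ℝ).exists_mem_open isOpen_ball
      (nonempty_ball.2 hδ : (ball (v (Fin.last N)) δ).Nonempty)
    simp only [mem_compl_iff, mem_iUnion, mem_union, mem_preimage, not_exists, not_or] at hpD
    refine ⟨Fin.snoc z p, fun i => ?_, fun i j hij => ?_⟩
    · cases i using Fin.lastCases with
      | last => simpa using hpv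
      | cast i => simpa [Fin.init] using hzv i
    · cases i using Fin.lastCases <;> cases j using Fin.lastCases
      · exact absurd rfl hij
      · simpa using (hpD _).1
      · simpa using (hpD _).2
      · simpa using hzD (ne_of_apply_ne Fin.castSucc hij)

open scoped Pointwise in
theorem exists_disjoint_translates_hole_lt {E : Type*} [NormedAddCommGroup E] [NormedSpace ℝ E]
    [Nontrivial E] [ProperSpace E] {Λ : Set E} (hc : Λ.Countable) (hd : RelativelyDense Λ)
    {ε : ℝ} (hε : 0 < ε) :
    ∃ (N : ℕ) (z : Fin N → E),
      (∀ i j : Fin N, i ≠ j →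
        Disjoint ((fun y => y + z i) '' Λ) ((fun y => y + z j) '' Λ)) ∧
      hole (⋃ i : Fin N, (fun y => y + z i) '' Λ) < ENNReal.ofReal ε := by
  obtain ⟨R, hR⟩ := hd.exists_forall_exists_dist_lt
  obtain ⟨t, -, ht, hcover⟩ :=
    (isCompact_closedBall (0 : E) R).finite_cover_balls (by positivity : 0 < ε / 4)
  obtain ⟨N, v, -, rfl⟩ := ht.fin_param
  rw [biUnion_range] at hcover
  have hD : (Λ - Λ).Countable := by simpa only [image2_sub] using hc.image2 hc (· - ·)
  obtain ⟨z, hzv, hzD⟩ := exists_dist_lt_pairwise_sub_notMem hD (by positivity : 0 < ε / 4) v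
  refine ⟨N, z, fun i j hij => disjoint_image_add_right_of_sub_notMem (hzD hij), ?_⟩
  calc hole _ ≤ ENNReal.ofReal (ε / 4 + ε / 4) :=
        hole_iUnion_image_add_right_le (by positivity) (by positivity) hR hcover hzv
    _ < ENNReal.ofReal ε := (ENNReal.ofReal_lt_ofReal_iff hε).2 (by linarith)

theorem disjoint_translates_small_hole_general {n : ℕ} (Λ : Set (Ed n))
    (hDel : IsDelone Λ) (ε : ℝ) (hε : 0 < ε) :
    ∃ (N : ℕ) (z : Fin N → Ed n),
      (∀ i j : Fin N, i ≠ j →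
        Disjoint ((fun y => y + z i) '' Λ) ((fun y => y + z j) '' Λ)) ∧
      hole (⋃ i : Fin N, (fun y => y + z i) '' Λ) < ENNReal.ofReal ε := by
  rcases subsingleton_or_nontrivial (Ed n) with _ | _
  · obtain ⟨_, hR⟩ := hDel.2.exists_forall_exists_dist_lt
    obtain ⟨l, hl, -⟩ := hR 0
    refine ⟨1, fun _ => 0, fun i j hij => absurd (Subsingleton.elim i j) hij, ?_⟩
    have hl' : l ∈ ⋃ _ : Fin 1, (fun y => y + 0) '' Λ := mem_iUnion.2 ⟨0, l, hl, add_zero l⟩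
    calc hole _ ≤ ENNReal.ofReal 0 :=
          hole_le_ofReal le_rfl fun x => ⟨l, hl', by rw [Subsingleton.elim x l, dist_self]⟩
      _ < ENNReal.ofReal ε := ENNReal.ofReal_lt_ofReal_iff hε |>.2 hε
  · exact exists_disjoint_translates_hole_lt hDel.1.countable hDel.2 hε

/-- an FLC Delone set has finitely many pairwise disjoint translates whose
union has hole smaller than any prescribed `ε > 0`. -/
theorem disjoint_translates_small_hole {n : ℕ} (Λ : Set (Ed n))
    (hDel : IsDelone Λ) (hFLC : FLC Λ) (ε : ℝ) (hε : 0 < ε) :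
    ∃ (N : ℕ) (z : Fin N → Ed n),
      (∀ i j : Fin N, i ≠ j →
        Disjoint ((fun y => y + z i) '' Λ) ((fun y => y + z j) '' Λ)) ∧
      hole (⋃ i : Fin N, (fun y => y + z i) '' Λ) < ENNReal.ofReal ε :=
  disjoint_translates_small_hole_general Λ hDel ε hε

end
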